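/- arXiv:2407.16003 — 2 statements merged into one kernel-verified Lean document; each statement's English description precedes it below -/
import Mathlib

section
/- Let m ≥ 3 and let G be a subgroup of Equiv.Perm (Fin m × Fin 2) all of whose elements are block-preserving, and let K = {g ∈ G : g is block-fixing} (the kernel in G of the induced homomorphism f). If the image {f g : g ∈ G} is either all of Equiv.Perm (Fin m) or equal to alternatingGroup (Fin m), then Nat.card K ∈ {1, 2, 2^(m−1), 2^m}. -/
/-- A permutation of `Fin m × Fin 2` is block-preserving if it permutes the
blocks `{a} × Fin 2`. -/
def IsBlockPreserving {m : ℕ} (σ : Equiv.Perm (Fin m × Fin 2)) : Prop :=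
  ∀ a : Fin m, (σ (a, 0)).1 = (σ (a, 1)).1

/-- A permutation of `Fin m × Fin 2` is block-fixing if it fixes every
block `{a} × Fin 2` setwise, i.e. it lies in the kernel of the induced map
to `Equiv.Perm (Fin m)`. -/
def IsBlockFixing {m : ℕ} (σ : Equiv.Perm (Fin m × Fin 2)) : Prop :=
  ∀ (a : Fin m) (i : Fin 2), (σ (a, i)).1 = a

/-!
A block-fixing permutation is a shift `(a, i) ↦ (a, i + v a)` with `v : Fin m → Fin 2`, so `K` is
an additive subgroup `V` of `Fin m → Fin 2`, and conjugating by an element of `G` lying over `π`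
permutes the coordinates of `v` by `π`; hence `V` is invariant under `Alt_m`. Either every vector
of `V` is constant, so `V = 0` or `V = {0, 1}`, or some `v ∈ V` is not, and then `v + v ∘ c` is
some `e_x + e_z` for a suitable 3-cycle `c`. As `Alt_m` is transitive on unordered pairs, `V` then
contains every `e_x + e_y`; these span the sum-zero hyperplane, which has index 2.
-/

open Equiv Equiv.Perm

section ParityVectors

variable {α : Type*}

lemma nat_card_le_two_of_forall_const {V : AddSubgroup (α → Fin 2)}
    (hV : ∀ v ∈ V, ∀ a b, v a = v b) : Nat.card V ≤ 2 := by
  have hsub : (V : Set (α → Fin 2)) ⊆ {0, 1} := by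
    intro v hv
    by_cases h : ∃ a, v a = 1
    · obtain ⟨a, ha⟩ := h
      exact Or.inr (funext fun b => (hV v hv b a).trans ha)
    · simp only [not_exists] at h
      exact Or.inl (funext fun b => by rw [Pi.zero_apply]; have := h b; fin_omega)
  calc Nat.card V = (V : Set (α → Fin 2)).ncard := Nat.card_coe_set_eq _
    _ ≤ ({0, 1} : Set (α → Fin 2)).ncard := Set.ncard_le_ncard hsub
    _ ≤ 2 := (Set.ncard_insert_le _ _).trans (by rw [Set.ncard_singleton])

variable [DecidableEq α]

def pairVec (x y : α) : α → Fin 2 := Pi.single x 1 + Pi.single y 1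

lemma pairVec_self (x : α) : pairVec x x = 0 := by
  rw [pairVec, ← Pi.single_add, show (1 + 1 : Fin 2) = 0 from rfl, Pi.single_zero]

lemma pairVec_comm (x y : α) : pairVec x y = pairVec y x := add_comm _ _

lemma pairVec_comp_perm (σ : Perm α) (x y : α) : pairVec (σ x) (σ y) ∘ σ = pairVec x y := by
  change Pi.single (σ x) (1 : Fin 2) ∘ σ + Pi.single (σ y) (1 : Fin 2) ∘ σ = _
  simp only [Pi.single_comp_equiv, symm_apply_apply, pairVec]

lemma add_comp_swap_mul_swap {x y z : α} (hyz : y ≠ z) {v : α → Fin 2} (hvxy : v x ≠ v y)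
    (hvyz : v y = v z) :
    v + v ∘ (swap x y * swap y z) = pairVec x z := by
  funext t
  simp only [Pi.add_apply, Function.comp_apply, Perm.mul_apply, pairVec, Pi.single_apply,
    swap_apply_def]
  split_ifs <;> subst_vars <;> first | fin_omega | simp_all

variable [Fintype α]

variable (α) in
def coordSum : (α → Fin 2) →+ Fin 2 where
  toFun v := ∑ a, v a
  map_zero' := by simp
  map_add' v w := Finset.sum_add_distrib

lemma index_ker_coordSum [Nonempty α] : (coordSum α).ker.index = 2 := by
  inhabit α
  have hsurj : Function.Surjective (coordSum α) := fun c =>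
    ⟨Pi.single default c, Finset.sum_pi_single' _ _ _ |>.trans (if_pos (Finset.mem_univ _))⟩
  rw [AddSubgroup.index_ker, AddMonoidHom.range_eq_top_of_surjective _ hsurj]
  simp

lemma ker_coordSum_le [Nonempty α] {V : AddSubgroup (α → Fin 2)} (hV : ∀ x y, pairVec x y ∈ V) :
    (coordSum α).ker ≤ V := by
  intro u hu
  inhabit α
  have hdecomp : u = ∑ t, (Pi.single t (u t) + Pi.single default (u t)) := by
    have hsingle : ∑ t, (Pi.single default (u t) : α → Fin 2) = Pi.single default (coordSum α u) :=
      (map_sum (AddMonoidHom.single (fun _ : α => Fin 2) default) u Finset.univ).symm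
    rw [Finset.sum_add_distrib, Finset.univ_sum_single, hsingle, hu, Pi.single_zero, add_zero]
  rw [hdecomp]
  refine V.sum_mem fun t _ => ?_
  rcases Fin.exists_fin_two.mp ⟨u t, rfl⟩ with h | h <;> rw [h]
  · simp
  · exact hV t default

lemma nat_card_eq_of_ker_coordSum_le [Nonempty α] {V : AddSubgroup (α → Fin 2)}
    (hV : (coordSum α).ker ≤ V) :
    Nat.card V = 2 ^ (Fintype.card α - 1) ∨ Nat.card V = 2 ^ Fintype.card α := by
  have hcard : Nat.card V * V.index = 2 ^ Fintype.card α := by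
    rw [AddSubgroup.card_mul_index, Nat.card_eq_fintype_card, Fintype.card_fun, Fintype.card_fin]
  have hpos : 0 < Fintype.card α := Fintype.card_pos
  have hdvd : V.index ∣ 2 := by
    simpa only [index_ker_coordSum] using AddSubgroup.index_dvd_of_le hV
  rcases (Nat.dvd_prime Nat.prime_two).mp hdvd with h | h <;> rw [h] at hcard
  · exact Or.inr (by rwa [mul_one] at hcard)
  · left
    rw [← pow_sub_one_mul hpos.ne'] at hcard
    exact Nat.eq_of_mul_eq_mul_right two_pos hcard

lemma exists_mem_alternatingGroup_apply_pair {x y u w : α} (hxy : x ≠ y) (huw : u ≠ w) :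
    ∃ σ ∈ alternatingGroup α, σ u = x ∧ σ w = y ∨ σ u = y ∧ σ w = x := by
  set w' := swap u x w
  have hw' : w' ≠ x := by simpa [w'] using (swap u x).injective.ne huw.symm
  set σ := swap w' y * swap u x
  have hσu : σ u = x := by simp [σ, swap_apply_of_ne_of_ne hw'.symm hxy]
  have hσw : σ w = y := by simp [σ, w']
  rcases Int.units_eq_one_or (sign σ) with h | h
  · exact ⟨σ, h, Or.inl ⟨hσu, hσw⟩⟩
  · refine ⟨σ * swap u w, ?_, Or.inr ⟨?_, ?_⟩⟩
    · rw [mem_alternatingGroup, Perm.sign_mul, h, sign_swap huw]; rfl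
    · simp [hσw]
    · simp [hσu]

variable {V : AddSubgroup (α → Fin 2)} (hV : ∀ σ ∈ alternatingGroup α, ∀ v ∈ V, v ∘ σ ∈ V)
include hV

lemma pairVec_mem_of_pairVec_mem {x y : α} (hxy : x ≠ y) (hmem : pairVec x y ∈ V) (u w : α) :
    pairVec u w ∈ V := by
  rcases eq_or_ne u w with rfl | huw
  · simp [pairVec_self]
  obtain ⟨σ, hσ, ⟨hu, hw⟩ | ⟨hu, hw⟩⟩ := exists_mem_alternatingGroup_apply_pair hxy huw
  · simpa [← hu, ← hw, pairVec_comp_perm] using hV σ hσ _ hmem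
  · rw [pairVec_comm]
    simpa [← hu, ← hw, pairVec_comm x, pairVec_comp_perm] using hV σ hσ _ hmem

lemma exists_pairVec_mem (hα : 3 ≤ Fintype.card α) {v : α → Fin 2} (hv : v ∈ V) {a b : α}
    (hab : v a ≠ v b) : ∃ x y, x ≠ y ∧ pairVec x y ∈ V := by
  have hpair : ({a, b} : Finset α).card < (Finset.univ : Finset α).card :=
    Finset.card_le_two.trans_lt (by rw [Finset.card_univ]; omega)
  obtain ⟨c, -, hc⟩ := Finset.exists_mem_notMem_of_card_lt_card hpair
  simp only [Finset.mem_insert, Finset.mem_singleton, not_or] at hc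
  have key : ∀ {x y z : α}, y ≠ z → v x ≠ v y → v y = v z → x ≠ z ∧ pairVec x z ∈ V := by
    intro x y z hyz hvxy hvyz
    refine ⟨fun h => hvxy (h ▸ hvyz.symm), ?_⟩
    rw [← add_comp_swap_mul_swap hyz hvxy hvyz]
    refine V.add_mem hv (hV _ ?_ v hv)
    rw [mem_alternatingGroup, Perm.sign_mul, sign_swap (ne_of_apply_ne v hvxy), sign_swap hyz]
    rfl
  by_cases hvc : v b = v c
  · exact ⟨a, c, key (Ne.symm hc.2) hab hvc⟩
  · exact ⟨b, c, key (Ne.symm hc.1) (Ne.symm hab) (by fin_omega)⟩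

theorem nat_card_mem_of_alternatingGroup_invariant (hα : 3 ≤ Fintype.card α) :
    Nat.card V ∈ ({1, 2, 2 ^ (Fintype.card α - 1), 2 ^ Fintype.card α} : Set ℕ) := by
  have : Nonempty α := Fintype.card_pos_iff.mp (by omega)
  by_cases hconst : ∀ v ∈ V, ∀ a b, v a = v b
  · have hle := nat_card_le_two_of_forall_const hconst
    have hpos : 0 < Nat.card V := Nat.card_pos
    interval_cases Nat.card V <;> simp
  · push Not at hconst
    obtain ⟨v, hv, a, b, hab⟩ := hconst
    obtain ⟨x, y, hxy, hmem⟩ := exists_pairVec_mem hV hα hv hab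
    rcases nat_card_eq_of_ker_coordSum_le
      (ker_coordSum_le (pairVec_mem_of_pairVec_mem hV hxy hmem)) with h | h <;> simp [h]

end ParityVectors

section BlockPermutations

variable {m : ℕ}

def blockShift (v : Fin m → Fin 2) : Perm (Fin m × Fin 2) where
  toFun p := (p.1, p.2 + v p.1)
  invFun p := (p.1, p.2 + v p.1)
  left_inv p := Prod.ext rfl (by simp only; fin_omega)
  right_inv p := Prod.ext rfl (by simp only; fin_omega)

@[simp]
lemma blockShift_apply (v : Fin m → Fin 2) (p : Fin m × Fin 2) :
    blockShift v p = (p.1, p.2 + v p.1) := rfl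

lemma blockShift_zero : blockShift (0 : Fin m → Fin 2) = 1 := by
  ext p <;> simp

lemma blockShift_add (v w : Fin m → Fin 2) : blockShift (v + w) = blockShift v * blockShift w := by
  ext p <;> simp only [blockShift_apply, Perm.mul_apply, Pi.add_apply]; fin_omega

lemma isBlockFixing_blockShift (v : Fin m → Fin 2) : IsBlockFixing (blockShift v) :=
  fun _ _ => rfl

lemma IsBlockPreserving.apply_eq {g : Perm (Fin m × Fin 2)} (hg : IsBlockPreserving g)
    (b : Fin m) (j : Fin 2) : g (b, j) = ((g (b, 0)).1, j + (g (b, 0)).2) := by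
  rcases Fin.exists_fin_two.mp ⟨j, rfl⟩ with rfl | rfl
  · simp
  · have hne : g (b, 1) ≠ g (b, 0) := g.injective.ne (by simp)
    refine Prod.ext (hg b).symm ?_
    have : (g (b, 1)).2 ≠ (g (b, 0)).2 := fun h => hne (Prod.ext (hg b).symm h)
    simp only
    fin_omega

lemma IsBlockFixing.isBlockPreserving {g : Perm (Fin m × Fin 2)} (hg : IsBlockFixing g) :
    IsBlockPreserving g :=
  fun a => (hg a 0).trans (hg a 1).symm

lemma IsBlockFixing.eq_blockShift {g : Perm (Fin m × Fin 2)} (hg : IsBlockFixing g) :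
    g = blockShift fun a => (g (a, 0)).2 := by
  ext ⟨a, i⟩ : 1
  rw [hg.isBlockPreserving.apply_eq, hg a 0, blockShift_apply]

lemma IsBlockPreserving.mul_blockShift {g : Perm (Fin m × Fin 2)} (hg : IsBlockPreserving g)
    {π : Perm (Fin m)} (hπ : ∀ a, (g (a, 0)).1 = π a) (v : Fin m → Fin 2) :
    g * blockShift v = blockShift (v ∘ π.symm) * g := by
  ext ⟨b, j⟩ : 1
  have hgb := hg.apply_eq b
  simp only [Perm.mul_apply, blockShift_apply, hgb (j + v b), hgb j, hπ, Function.comp_apply,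
    symm_apply_apply, add_right_comm]

def shiftVectors (G : Subgroup (Perm (Fin m × Fin 2))) : AddSubgroup (Fin m → Fin 2) where
  carrier := {v | blockShift v ∈ G}
  zero_mem' := by simp [blockShift_zero, G.one_mem]
  add_mem' hv hw := by simpa [blockShift_add] using G.mul_mem hv hw
  neg_mem' {v} hv := by
    have hneg : -v = v := funext fun a => (by decide : ∀ x : Fin 2, -x = x) (v a)
    simpa [hneg] using hv

variable {G : Subgroup (Perm (Fin m × Fin 2))}

lemma nat_card_blockFixing_eq_nat_card_shiftVectors :
    Nat.card {g : Perm (Fin m × Fin 2) // g ∈ G ∧ IsBlockFixing g} = Nat.card (shiftVectors G) :=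
  Nat.card_congr
    { toFun g := ⟨fun a => (g.1 (a, 0)).2, by
        simpa [shiftVectors, ← g.2.2.eq_blockShift] using g.2.1⟩
      invFun v := ⟨blockShift v, v.2, isBlockFixing_blockShift v⟩
      left_inv g := Subtype.ext g.2.2.eq_blockShift.symm
      right_inv v := Subtype.ext (funext fun a => zero_add (v.1 a)) }

lemma comp_symm_mem_shiftVectors {g : Perm (Fin m × Fin 2)} (hgG : g ∈ G)
    (hg : IsBlockPreserving g) {π : Perm (Fin m)} (hπ : ∀ a, (g (a, 0)).1 = π a)
    {v : Fin m → Fin 2} (hv : v ∈ shiftVectors G) : v ∘ π.symm ∈ shiftVectors G := by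
  have hconj : blockShift (v ∘ π.symm) = g * blockShift v * g⁻¹ := by
    rw [hg.mul_blockShift hπ, mul_inv_cancel_right]
  change blockShift (v ∘ π.symm) ∈ G
  rw [hconj]
  exact G.mul_mem (G.mul_mem hgG hv) (G.inv_mem hgG)

end BlockPermutations

theorem stmt5 {m : ℕ} (hm : 3 ≤ m) (G : Subgroup (Equiv.Perm (Fin m × Fin 2)))
    (hBP : ∀ g ∈ G, IsBlockPreserving g)
    -- the image of f is Sym_m or Alt_m
    (hIm : {π : Equiv.Perm (Fin m) | ∃ g ∈ G, ∀ a, (g (a, 0)).1 = π a} = Set.univ ∨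
      {π : Equiv.Perm (Fin m) | ∃ g ∈ G, ∀ a, (g (a, 0)).1 = π a} =
        ↑(alternatingGroup (Fin m))) :
    Nat.card {g : Equiv.Perm (Fin m × Fin 2) // g ∈ G ∧ IsBlockFixing g} ∈
      ({1, 2, 2 ^ (m - 1), 2 ^ m} : Set ℕ) := by
  have hinv : ∀ σ ∈ alternatingGroup (Fin m), ∀ v ∈ shiftVectors G, v ∘ σ ∈ shiftVectors G := by
    intro σ hσ v hv
    have hlift : σ⁻¹ ∈ {π : Perm (Fin m) | ∃ g ∈ G, ∀ a, (g (a, 0)).1 = π a} := by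
      rcases hIm with h | h <;> rw [h]
      exacts [Set.mem_univ _, inv_mem hσ]
    obtain ⟨g, hgG, hπ⟩ := hlift
    simpa [Perm.inv_def] using comp_symm_mem_shiftVectors hgG (hBP g hgG) hπ hv
  rw [nat_card_blockFixing_eq_nat_card_shiftVectors]
  simpa using nat_card_mem_of_alternatingGroup_invariant hinv (by simpa using hm)
end

section
/- Let m ≥ 3 and let G be a subgroup of Equiv.Perm (Fin m × Fin 2) all of whose elements are block-preserving, acting transitively on Fin m × Fin 2, and such that the image {f g : g ∈ G} equals alternatingGroup (Fin m). Let K = {g ∈ G : g is block-fixing}. Then: (a) if G contains a block-fixing element τ whose support has exactly 2 elements (a transposition fixing all blocks), then Nat.card K = 2^m; (b) if G contains a block-fixing element τ whose support has exactly 4 elements (a 2-transposition fixing all blocks), then 2^(m−1) ≤ Nat.card K. -/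
/-! A block-fixing permutation is determined by the vector `v ∈ 𝔽₂^m = (Fin m → Fin 2)`
recording which blocks it swaps, and composition becomes addition, so `K` is an additive
subgroup `V` of `𝔽₂^m`. Conjugation by `g ∈ G` permutes the coordinates of `V` by the image of
`g`, so `V` is invariant under `Alt_m`. In case (a), `V` contains a unit vector `e_b`, hence all
of them by transitivity of `Alt_m` (`m ≥ 3`), so `V = 𝔽₂^m`. In case (b), `V` contains some
`e_b + e_c`, hence all `e_a + e_b` (move `{b, c}` to `{a, b}` by a 3-cycle); together with `e_b`
these span `𝔽₂^m`, so `2 ^ m ≤ 2 * |V|`. -/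

open Finset

section BinaryVectors

variable {ι : Type*} [Fintype ι] [DecidableEq ι]

theorem sum_filter_ne_zero_single_one (v : ι → Fin 2) :
    ∑ a with v a ≠ 0, Pi.single a 1 = v :=
  calc ∑ a with v a ≠ 0, Pi.single a 1
      = ∑ a with v a ≠ 0, Pi.single a (v a) :=
        sum_congr rfl fun a ha => by rw [Fin.eq_one_of_ne_zero _ (mem_filter.1 ha).2]
    _ = ∑ a, Pi.single a (v a) :=
        sum_filter_of_ne fun a _ h ha => h (by rw [ha, Pi.single_zero])
    _ = v := univ_sum_single v

namespace AddSubgroup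

variable (H : AddSubgroup (ι → Fin 2))

theorem eq_top_of_forall_single_one_mem (h : ∀ a, Pi.single a 1 ∈ H) : H = ⊤ :=
  eq_top_iff.2 fun v _ => sum_filter_ne_zero_single_one v ▸ sum_mem fun a _ => h a

theorem two_pow_card_sub_one_le_natCard_of_forall_single_add_single_mem (b : ι)
    (h : ∀ a, Pi.single a 1 + Pi.single b 1 ∈ H) :
    2 ^ (Nat.card ι - 1) ≤ Nat.card H := by
  have hsurj : Function.Surjective fun p : H × Fin 2 => (p.1 : ι → Fin 2) - Pi.single b p.2 := by
    intro v
    have hmem : ∑ a with v a ≠ 0, (Pi.single a 1 + Pi.single b 1) ∈ H :=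
      sum_mem fun a _ => h a
    rw [sum_add_distrib, sum_const, ← Pi.single_nsmul, sum_filter_ne_zero_single_one] at hmem
    exact ⟨(⟨_, hmem⟩, _), add_sub_cancel_right _ _⟩
  have : Nonempty ι := ⟨b⟩
  refine Nat.le_of_mul_le_mul_right (c := 2) ?_ two_pos
  calc 2 ^ (Nat.card ι - 1) * 2 = Nat.card (ι → Fin 2) := by
        rw [← pow_succ, Nat.sub_add_cancel Nat.card_pos, Nat.card_fun, Nat.card_fin]
    _ ≤ Nat.card (H × Fin 2) := Nat.card_le_card_of_surjective _ hsurj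
    _ = Nat.card H * 2 := by rw [Nat.card_prod, Nat.card_fin]

variable {H} (hH : ∀ π ∈ alternatingGroup ι, ∀ v ∈ H, v ∘ π.symm ∈ H)
include hH

theorem eq_top_of_alternating_invariant_of_single_one_mem (hι : 3 ≤ Nat.card ι) {b : ι}
    (hb : Pi.single b 1 ∈ H) : H = ⊤ := by
  have := alternatingGroup.isPretransitive_of_three_le_card ι hι
  refine H.eq_top_of_forall_single_one_mem fun a => ?_
  obtain ⟨π, rfl⟩ := MulAction.exists_smul_eq (alternatingGroup ι) b a
  simpa [Pi.single_comp_equiv, Subgroup.smul_def, Equiv.Perm.smul_def] using hH π π.2 _ hb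

theorem two_pow_card_sub_one_le_natCard_of_alternating_invariant {b c : ι} (hbc : b ≠ c)
    (hpair : Pi.single b 1 + Pi.single c 1 ∈ H) : 2 ^ (Nat.card ι - 1) ≤ Nat.card H := by
  refine H.two_pow_card_sub_one_le_natCard_of_forall_single_add_single_mem b fun a => ?_
  by_cases hab : a = b
  · rw [hab, ← Pi.single_add, show (1 + 1 : Fin 2) = 0 from rfl, Pi.single_zero]
    exact H.zero_mem
  by_cases hac : a = c
  · rwa [hac, add_comm]
  -- a 3-cycle in the alternating group sends `b ↦ a` and `c ↦ b`
  have hπ := (Equiv.Perm.isThreeCycle_swap_mul_swap_same hab hac hbc).mem_alternatingGroup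
  simpa [Pi.add_comp, Pi.single_comp_equiv, Equiv.swap_apply_of_ne_of_ne (Ne.symm hab) hbc] using
    hH _ hπ _ hpair

end AddSubgroup

end BinaryVectors

section Blocks

variable {m : ℕ}

def blockFlip (v : Fin m → Fin 2) : Equiv.Perm (Fin m × Fin 2) :=
  Equiv.prodCongrRight fun a => Equiv.addRight (v a)

@[simp]
theorem blockFlip_apply (v : Fin m → Fin 2) (p : Fin m × Fin 2) :
    blockFlip v p = (p.1, p.2 + v p.1) :=
  rfl

theorem blockFlip_zero : blockFlip (0 : Fin m → Fin 2) = 1 :=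
  Equiv.ext fun _ => by simp

theorem blockFlip_add (v w : Fin m → Fin 2) : blockFlip (v + w) = blockFlip v * blockFlip w :=
  Equiv.ext fun p => by simp [add_assoc, add_comm (v p.1)]

theorem blockFlip_injective : Function.Injective (blockFlip (m := m)) := fun v w h =>
  funext fun a => by simpa using congrArg (fun σ => (σ (a, 0)).2) h

theorem isBlockFixing_blockFlip (v : Fin m → Fin 2) : IsBlockFixing (blockFlip v) :=
  fun _ _ => rfl

theorem card_support_blockFlip (v : Fin m → Fin 2) :
    #(blockFlip v).support = 2 * #{a | v a ≠ 0} := by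
  have : (blockFlip v).support = ({a | v a ≠ 0} : Finset (Fin m)) ×ˢ univ := by
    ext ⟨a, i⟩
    simp [Prod.ext_iff]
  rw [this, card_product, card_univ, Fintype.card_fin, mul_comm]

theorem IsBlockPreserving.apply_eq_s6 {σ : Equiv.Perm (Fin m × Fin 2)} (hσ : IsBlockPreserving σ)
    (a : Fin m) (i : Fin 2) : σ (a, i) = ((σ (a, 0)).1, i + (σ (a, 0)).2) := by
  obtain rfl | rfl : i = 0 ∨ i = 1 := by omega
  · simp
  · have hne : σ (a, 1) ≠ σ (a, 0) := σ.injective.ne (by simp)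
    have hsnd : (σ (a, 1)).2 ≠ (σ (a, 0)).2 := fun h => hne (Prod.ext (hσ a).symm h)
    exact Prod.ext (hσ a).symm (by dsimp only; omega)

theorem IsBlockFixing.isBlockPreserving_s6 {σ : Equiv.Perm (Fin m × Fin 2)}
    (hσ : IsBlockFixing σ) : IsBlockPreserving σ :=
  fun a => (hσ a 0).trans (hσ a 1).symm

theorem IsBlockFixing.blockFlip_eq {σ : Equiv.Perm (Fin m × Fin 2)} (hσ : IsBlockFixing σ) :
    blockFlip (fun a => (σ (a, 0)).2) = σ :=
  Equiv.ext fun ⟨a, i⟩ => by rw [hσ.isBlockPreserving_s6.apply_eq_s6, hσ a 0, blockFlip_apply]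

theorem IsBlockFixing.exists_blockFlip_sum_single {σ : Equiv.Perm (Fin m × Fin 2)}
    (hσ : IsBlockFixing σ) :
    ∃ s : Finset (Fin m), blockFlip (∑ a ∈ s, Pi.single a 1) = σ ∧ #σ.support = 2 * #s := by
  refine ⟨_, ?_, by rw [← hσ.blockFlip_eq, card_support_blockFlip]⟩
  rw [sum_filter_ne_zero_single_one, hσ.blockFlip_eq]

theorem IsBlockPreserving.mul_blockFlip_mul_inv {g : Equiv.Perm (Fin m × Fin 2)}
    (hg : IsBlockPreserving g) {π : Equiv.Perm (Fin m)} (hπ : ∀ a, (g (a, 0)).1 = π a)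
    (v : Fin m → Fin 2) : g * blockFlip v * g⁻¹ = blockFlip (v ∘ π.symm) := by
  rw [mul_inv_eq_iff_eq_mul]
  ext ⟨a, i⟩ : 1
  rw [Equiv.Perm.mul_apply, Equiv.Perm.mul_apply, blockFlip_apply, hg.apply_eq_s6 a (i + v a),
    hg.apply_eq_s6 a i, blockFlip_apply, hπ, Function.comp_apply, Equiv.symm_apply_apply,
    add_right_comm]

def flipSubgroup (G : Subgroup (Equiv.Perm (Fin m × Fin 2))) : AddSubgroup (Fin m → Fin 2) where
  carrier := {v | blockFlip v ∈ G}
  add_mem' {v w} hv hw := by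
    simpa only [Set.mem_ofPred_eq, blockFlip_add] using mul_mem hv hw
  zero_mem' := by simpa only [Set.mem_ofPred_eq, blockFlip_zero] using one_mem G
  neg_mem' {v} hv := by
    have : blockFlip (-v) = (blockFlip v)⁻¹ :=
      eq_inv_of_mul_eq_one_left (by rw [← blockFlip_add, neg_add_cancel, blockFlip_zero])
    simpa only [Set.mem_ofPred_eq, this] using inv_mem hv

section flipSubgroup

variable {G : Subgroup (Equiv.Perm (Fin m × Fin 2))}

@[simp]
theorem mem_flipSubgroup {v : Fin m → Fin 2} : v ∈ flipSubgroup G ↔ blockFlip v ∈ G :=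
  Iff.rfl

theorem natCard_blockFixing_eq_natCard_flipSubgroup :
    Nat.card {g : Equiv.Perm (Fin m × Fin 2) // g ∈ G ∧ IsBlockFixing g} =
      Nat.card (flipSubgroup G) := by
  refine (Nat.card_congr (Equiv.ofBijective
    (fun v : flipSubgroup G => ⟨blockFlip v, v.2, isBlockFixing_blockFlip v⟩) ⟨?_, ?_⟩)).symm
  · exact fun v w h => Subtype.ext (blockFlip_injective (congrArg Subtype.val h))
  · rintro ⟨g, hg, hfix⟩
    exact ⟨⟨_, mem_flipSubgroup.2 (hfix.blockFlip_eq ▸ hg)⟩, Subtype.ext hfix.blockFlip_eq⟩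

theorem comp_symm_mem_flipSubgroup (hBP : ∀ g ∈ G, IsBlockPreserving g)
    (hIm : (alternatingGroup (Fin m) : Set (Equiv.Perm (Fin m))) ⊆
      {π | ∃ g ∈ G, ∀ a, (g (a, 0)).1 = π a}) :
    ∀ π ∈ alternatingGroup (Fin m), ∀ v ∈ flipSubgroup G, v ∘ π.symm ∈ flipSubgroup G := by
  intro π hπ v hv
  obtain ⟨g, hg, hgπ⟩ := hIm hπ
  rw [mem_flipSubgroup, ← (hBP g hg).mul_blockFlip_mul_inv hgπ]
  exact mul_mem (mul_mem hg hv) (inv_mem hg)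

end flipSubgroup

end Blocks

theorem stmt6_general {m : ℕ} (hm : 3 ≤ m) (G : Subgroup (Equiv.Perm (Fin m × Fin 2)))
    (hBP : ∀ g ∈ G, IsBlockPreserving g)
    -- the image of f equals Alt_m
    (hIm : {π : Equiv.Perm (Fin m) | ∃ g ∈ G, ∀ a, (g (a, 0)).1 = π a} =
      ↑(alternatingGroup (Fin m))) :
    ((∃ τ ∈ G, IsBlockFixing τ ∧ τ.support.card = 2) →
      Nat.card {g : Equiv.Perm (Fin m × Fin 2) // g ∈ G ∧ IsBlockFixing g} = 2 ^ m) ∧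
    ((∃ τ ∈ G, IsBlockFixing τ ∧ τ.support.card = 4) →
      2 ^ (m - 1) ≤
        Nat.card {g : Equiv.Perm (Fin m × Fin 2) // g ∈ G ∧ IsBlockFixing g}) := by
  have hinv := comp_symm_mem_flipSubgroup hBP hIm.symm.subset
  rw [natCard_blockFixing_eq_natCard_flipSubgroup]
  refine ⟨fun ⟨τ, hτG, hτ, hsupp⟩ => ?_, fun ⟨τ, hτG, hτ, hsupp⟩ => ?_⟩
  · obtain ⟨s, rfl, hs⟩ := hτ.exists_blockFlip_sum_single
    obtain ⟨b, rfl⟩ := card_eq_one.1 (by omega : #s = 1)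
    rw [sum_singleton] at hτG
    rw [AddSubgroup.eq_top_of_alternating_invariant_of_single_one_mem hinv (by simpa) hτG,
      AddSubgroup.card_top, Nat.card_fun]
    simp
  · obtain ⟨s, rfl, hs⟩ := hτ.exists_blockFlip_sum_single
    obtain ⟨b, c, hbc, rfl⟩ := card_eq_two.1 (by omega : #s = 2)
    rw [sum_pair hbc] at hτG
    simpa using AddSubgroup.two_pow_card_sub_one_le_natCard_of_alternating_invariant hinv hbc hτG

theorem stmt6 {m : ℕ} (hm : 3 ≤ m) (G : Subgroup (Equiv.Perm (Fin m × Fin 2)))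
    (hBP : ∀ g ∈ G, IsBlockPreserving g)
    (htrans : MulAction.IsPretransitive ↥G (Fin m × Fin 2))
    -- the image of f equals Alt_m
    (hIm : {π : Equiv.Perm (Fin m) | ∃ g ∈ G, ∀ a, (g (a, 0)).1 = π a} =
      ↑(alternatingGroup (Fin m))) :
    ((∃ τ ∈ G, IsBlockFixing τ ∧ τ.support.card = 2) →
      Nat.card {g : Equiv.Perm (Fin m × Fin 2) // g ∈ G ∧ IsBlockFixing g} = 2 ^ m) ∧
    ((∃ τ ∈ G, IsBlockFixing τ ∧ τ.support.card = 4) →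
      2 ^ (m - 1) ≤
        Nat.card {g : Equiv.Perm (Fin m × Fin 2) // g ∈ G ∧ IsBlockFixing g}) :=
  stmt6_general hm G hBP hIm
end
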